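/- Let n ≥ k ≥ 1 and let X be an (n,k) right GOGAm trapezoid. Define the array X̂ of size n by X̂_{i,j} = X_{i,j} for indices in the trapezoid (i−j ≤ k−1) and X̂_{i,j} = 1 for n ≥ i ≥ j+k. Then X̂ is a GOGAm triangle of size n, and it is the minimal GOGAm triangle extending X: for every GOGAm triangle Y of size n whose restriction to the indices with i−j ≤ k−1 equals X, one has X̂_{i,j} ≤ Y_{i,j} for all n ≥ i ≥ j ≥ 1. -/

import Mathlib

/-- A Gelfand-Tsetlin triangle of size `n`: a triangular array of positive integers
`X i j` for `n ≥ i ≥ j ≥ 1` with `X (i+1) j ≤ X i j ≤ X (i+1) (j+1)`. -/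
def IsGT (n : ℕ) (X : ℕ → ℕ → ℤ) : Prop :=
  (∀ i j, 1 ≤ j → j ≤ i → i ≤ n → 1 ≤ X i j) ∧
  (∀ i j, 1 ≤ j → j ≤ i → i + 1 ≤ n → X (i+1) j ≤ X i j ∧ X i j ≤ X (i+1) (j+1))

/-- A Gog triangle of size `n`: a Gelfand-Tsetlin triangle with strictly increasing
rows and top row `X n j = j`. -/
def IsGog (n : ℕ) (X : ℕ → ℕ → ℤ) : Prop :=
  IsGT n X ∧
  (∀ i j, 1 ≤ j → j + 1 ≤ i → i ≤ n → X i j < X i (j+1)) ∧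
  (∀ j, 1 ≤ j → j ≤ n → X n j = (j : ℤ))

/-- A Magog triangle of size `n`. -/
def IsMagog (n : ℕ) (X : ℕ → ℕ → ℤ) : Prop :=
  IsGT n X ∧ ∀ j, 1 ≤ j → j ≤ n → X j j ≤ (j : ℤ)

/-- A GOGAm triangle of size `n`, characterized by the family of inequalities. -/
def IsGogam (n : ℕ) (X : ℕ → ℕ → ℤ) : Prop :=
  IsGT n X ∧ X n n ≤ (n : ℤ) ∧
  ∀ k : ℕ, 1 ≤ k → k ≤ n - 1 →
    ∀ j : ℕ → ℕ, j 0 = n → (∀ i, i < n - k → j (i+1) < j i) → 1 ≤ j (n - k) →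
      (∑ i ∈ Finset.range (n - k),
        (X (j i + i) (j i) - X (j (i+1) + i) (j (i+1))))
        + X (j (n-k) + (n-k)) (j (n-k)) ≤ (k : ℤ)

/-- The number of inversions of `X` (pairs `(i,j)` with `X i j = X (i+1) j`). -/
noncomputable def invCount (n : ℕ) (X : ℕ → ℕ → ℤ) : ℕ :=
  Set.ncard {p : ℕ × ℕ | 1 ≤ p.2 ∧ p.2 ≤ p.1 ∧ p.1 + 1 ≤ n ∧ X p.1 p.2 = X (p.1+1) p.2}

/-- The number of coinversions of `X` (pairs `(i,j)` with `X i j = X (i+1) (j+1)`). -/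
noncomputable def coinvCount (n : ℕ) (X : ℕ → ℕ → ℤ) : ℕ :=
  Set.ncard {p : ℕ × ℕ | 1 ≤ p.2 ∧ p.2 ≤ p.1 ∧ p.1 + 1 ≤ n ∧ X p.1 p.2 = X (p.1+1) (p.2+1)}

/-!
In a path sum the two entries of step `i` and the final entry after `m` steps lie on the
diagonals `i - j = i` and `i - j = m`. Hence for `X̂` the steps `i ≥ k` contribute `0` and,
when `m ≥ k`, the final entry contributes `1`. For a GOGAm extension `Y` of `X`, bend the path
after step `k` so that it stays in the row `j_k + k`: its further steps become differences
`Y r c - Y (r-1) (c-1) ≥ 0` and its final entry is `≥ 1`, so the path sum of `X̂` is at most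
a path sum of `Y`. Minimality is the positivity of `Y`.
-/

open Finset

def IsGogamPath (n m : ℕ) (j : ℕ → ℕ) : Prop :=
  j 0 = n ∧ (∀ i, i < m → j (i + 1) < j i) ∧ 1 ≤ j m

def pathStep (X : ℕ → ℕ → ℤ) (j : ℕ → ℕ) (i : ℕ) : ℤ :=
  X (j i + i) (j i) - X (j (i + 1) + i) (j (i + 1))

def pathSum (X : ℕ → ℕ → ℤ) (m : ℕ) (j : ℕ → ℕ) : ℤ :=
  ∑ i ∈ range m, pathStep X j i + X (j m + m) (j m)

def fillOnes (k : ℕ) (X : ℕ → ℕ → ℤ) (i j : ℕ) : ℤ :=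
  if i < j + k then X i j else 1

/-- Follows `j` for `k` steps, then moves diagonally: `bendPath k j i + i = j k + k` for `i ≥ k`. -/
def bendPath (k : ℕ) (j : ℕ → ℕ) (i : ℕ) : ℕ :=
  j (min i k) - (i - k)

theorem isGogam_iff_pathSum {n : ℕ} {X : ℕ → ℕ → ℤ} :
    IsGogam n X ↔ IsGT n X ∧ X n n ≤ n ∧
      ∀ K, 1 ≤ K → K ≤ n - 1 → ∀ j, IsGogamPath n (n - K) j → pathSum X (n - K) j ≤ K := by
  simp only [IsGogam, IsGogamPath, pathSum, pathStep, and_imp]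

namespace IsGogamPath

variable {n m : ℕ} {j : ℕ → ℕ}

theorem apply_add_le (hj : IsGogamPath n m j) {a d : ℕ} (h : a + d ≤ m) :
    j (a + d) + d ≤ j a := by
  induction d generalizing a with
  | zero => simp
  | succ d ih =>
    have := ih (a := a + 1) (by omega)
    have := hj.2.1 a (by omega)
    rw [show a + (d + 1) = a + 1 + d by omega]
    omega

theorem apply_add_le_top (hj : IsGogamPath n m j) {i : ℕ} (hi : i ≤ m) : j i + i ≤ n := by
  simpa [hj.1] using hj.apply_add_le (a := 0) (d := i) (by omega)

theorem sub_lt_apply (hj : IsGogamPath n m j) {i : ℕ} (hi : i ≤ m) : m - i < j i := by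
  have := hj.apply_add_le (a := i) (d := m - i) (by omega)
  rw [Nat.add_sub_cancel' hi] at this
  have := hj.2.2
  omega

theorem pathSum_congr (hj : IsGogamPath n m j) {X Y : ℕ → ℕ → ℤ}
    (hXY : ∀ i j, 1 ≤ j → j ≤ i → i ≤ n → X i j = Y i j) :
    pathSum X m j = pathSum Y m j := by
  have hbound := fun i (hi : i ≤ m) => And.intro (hj.sub_lt_apply hi) (hj.apply_add_le_top hi)
  unfold pathSum pathStep
  congr 1
  · refine sum_congr rfl fun i hi => ?_
    have := hbound i (by simp at hi; omega)
    have := hbound (i + 1) (by simp at hi; omega)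
    rw [hXY _ _ (by omega) (by omega) (by omega), hXY _ _ (by omega) (by omega) (by omega)]
  · have := hbound m le_rfl
    exact hXY _ _ (by omega) (by omega) (by omega)

theorem bend {k : ℕ} (hj : IsGogamPath n m j) (hk : k ≤ m) :
    IsGogamPath n m (bendPath k j) := by
  have hjk := hj.sub_lt_apply hk
  refine ⟨by simp [bendPath, hj.1], fun i hi => ?_, ?_⟩
  · by_cases h : i < k
    · simpa [bendPath, min_eq_left (by omega : i + 1 ≤ k),
        Nat.sub_eq_zero_of_le (by omega : i + 1 ≤ k), Nat.sub_eq_zero_of_le h.le,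
        min_eq_left h.le] using hj.2.1 i hi
    · simp only [bendPath, min_eq_right (by omega : k ≤ i),
        min_eq_right (by omega : k ≤ i + 1)]
      omega
  · simp only [bendPath, min_eq_right hk]
    omega

end IsGogamPath

theorem IsGT.congr {n : ℕ} {X Y : ℕ → ℕ → ℤ} (hX : IsGT n X)
    (hXY : ∀ i j, 1 ≤ j → j ≤ i → i ≤ n → X i j = Y i j) : IsGT n Y := by
  refine ⟨fun i j h1 h2 h3 => hXY i j h1 h2 h3 ▸ hX.1 i j h1 h2 h3, fun i j h1 h2 h3 => ?_⟩
  rw [← hXY i j h1 h2 (by omega), ← hXY (i + 1) j h1 (by omega) h3,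
    ← hXY (i + 1) (j + 1) (by omega) (by omega) h3]
  exact hX.2 i j h1 h2 h3

theorem IsGogam.congr {n : ℕ} {X Y : ℕ → ℕ → ℤ} (hX : IsGogam n X) (hn : 0 < n)
    (hXY : ∀ i j, 1 ≤ j → j ≤ i → i ≤ n → X i j = Y i j) : IsGogam n Y := by
  rw [isGogam_iff_pathSum] at hX ⊢
  obtain ⟨hGT, hnn, hpath⟩ := hX
  refine ⟨hGT.congr hXY, ?_, fun K hK1 hKn j hj => ?_⟩
  · exact hXY n n hn le_rfl le_rfl ▸ hnn
  · exact hj.pathSum_congr hXY ▸ hpath K hK1 hKn j hj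

section FillOnes

variable {n m k : ℕ} {X Y : ℕ → ℕ → ℤ} {j : ℕ → ℕ}

theorem IsGT.fillOnes (hY : IsGT n Y) : IsGT n (fillOnes k Y) := by
  refine ⟨fun i j h1 h2 h3 => ?_, fun i j h1 h2 h3 => ?_⟩
  · unfold _root_.fillOnes
    split_ifs
    exacts [hY.1 i j h1 h2 h3, le_rfl]
  · have hpos := hY.1 i j h1 h2 (by omega)
    have hint := hY.2 i j h1 h2 h3
    unfold _root_.fillOnes
    constructor <;> split_ifs <;> omega

theorem pathStep_fillOnes (i : ℕ) :
    pathStep (fillOnes k Y) j i = if i < k then pathStep Y j i else 0 := by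
  unfold pathStep fillOnes
  split_ifs <;> omega

theorem pathSum_fillOnes_of_lt (hm : m < k) : pathSum (fillOnes k Y) m j = pathSum Y m j := by
  unfold pathSum
  rw [sum_congr rfl fun i hi => (pathStep_fillOnes i).trans (if_pos (by simp at hi; omega)),
    fillOnes, if_pos (by omega)]

theorem pathSum_fillOnes_of_le (hm : k ≤ m) :
    pathSum (fillOnes k Y) m j = ∑ i ∈ range k, pathStep Y j i + 1 := by
  unfold pathSum
  rw [← sum_range_add_sum_Ico _ hm, fillOnes, if_neg (by omega),
    sum_congr rfl fun i hi => (pathStep_fillOnes i).trans (if_pos (by simpa using hi)),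
    sum_eq_zero fun i hi => (pathStep_fillOnes i).trans (if_neg (by simp at hi; omega)),
    add_zero]

theorem pathStep_bendPath_of_lt {i : ℕ} (hi : i < k) :
    pathStep Y (bendPath k j) i = pathStep Y j i := by
  simp [pathStep, bendPath, min_eq_left hi.le, min_eq_left (Nat.succ_le_of_lt hi),
    Nat.sub_eq_zero_of_le hi.le, Nat.sub_eq_zero_of_le (Nat.succ_le_of_lt hi)]

/-- After the bend, a step compares `Y r c` with `Y (r - 1) (c - 1)`, where `r = j k + k`. -/
theorem IsGogamPath.pathStep_bendPath_nonneg (hY : IsGT n Y) (hj : IsGogamPath n m j)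
    {i : ℕ} (hki : k ≤ i) (hi : i < m) : 0 ≤ pathStep Y (bendPath k j) i := by
  have hjk := hj.sub_lt_apply (i := k) (by omega)
  have hjkn := hj.apply_add_le_top (i := k) (by omega)
  have hbi : bendPath k j i = j k - (i - k) := by simp [bendPath, min_eq_right hki]
  have hbi1 : bendPath k j (i + 1) = j k - (i + 1 - k) := by
    simp [bendPath, min_eq_right (by omega : k ≤ i + 1)]
  have := (hY.2 (j k + k - 1) (j k - (i + 1 - k)) (by omega) (by omega) (by omega)).2
  rw [show j k + k - 1 + 1 = j k + k by omega, show j k - (i + 1 - k) + 1 = j k - (i - k) by omega]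
    at this
  rw [pathStep, hbi, hbi1, show j k - (i - k) + i = j k + k by omega,
    show j k - (i + 1 - k) + i = j k + k - 1 by omega]
  omega

theorem IsGogamPath.pathSum_fillOnes_le (hY : IsGT n Y) (hj : IsGogamPath n m j)
    (hkm : k ≤ m) : pathSum (fillOnes k Y) m j ≤ pathSum Y m (bendPath k j) := by
  have hend : 1 ≤ Y (bendPath k j m + m) (bendPath k j m) :=
    hY.1 _ _ (hj.bend hkm).2.2 (by omega) ((hj.bend hkm).apply_add_le_top le_rfl)
  have htail : 0 ≤ ∑ i ∈ Ico k m, pathStep Y (bendPath k j) i :=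
    sum_nonneg fun i hi => by
      rw [mem_Ico] at hi
      exact hj.pathStep_bendPath_nonneg hY hi.1 hi.2
  rw [pathSum_fillOnes_of_le hkm, pathSum, ← sum_range_add_sum_Ico _ hkm,
    sum_congr rfl fun i hi => pathStep_bendPath_of_lt (by simpa using hi)]
  omega

theorem IsGogam.fillOnes (hY : IsGogam n Y) (hk : 0 < k) : IsGogam n (fillOnes k Y) := by
  rw [isGogam_iff_pathSum] at hY ⊢
  obtain ⟨hGT, hnn, hpath⟩ := hY
  refine ⟨hGT.fillOnes, by rwa [_root_.fillOnes, if_pos (by omega)], fun K hK1 hKn j hj => ?_⟩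
  rcases lt_or_ge (n - K) k with hm | hm
  · rw [pathSum_fillOnes_of_lt hm]
    exact hpath K hK1 hKn j hj
  · exact (hj.pathSum_fillOnes_le hGT hm).trans (hpath K hK1 hKn _ (hj.bend hm))

end FillOnes

/-- Minimal completion of an `(n,k)` right GOGAm trapezoid: filling with `1`'s gives
the smallest GOGAm triangle of size `n` extending it. -/
theorem stmt4 (n k : ℕ) (hk1 : 1 ≤ k) (hkn : k ≤ n) (X : ℕ → ℕ → ℤ)
    (hX : ∃ Y : ℕ → ℕ → ℤ, IsGogam n Y ∧
      ∀ i j, 1 ≤ j → j ≤ i → i ≤ n → i < j + k → X i j = Y i j) :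
    IsGogam n (fun i j => if i < j + k then X i j else 1) ∧
    ∀ Y : ℕ → ℕ → ℤ, IsGogam n Y →
      (∀ i j, 1 ≤ j → j ≤ i → i ≤ n → i < j + k → Y i j = X i j) →
      ∀ i j, 1 ≤ j → j ≤ i → i ≤ n →
        (if i < j + k then X i j else (1 : ℤ)) ≤ Y i j := by
  obtain ⟨Y, hY, hXY⟩ := hX
  refine ⟨(hY.fillOnes hk1).congr (hk1.trans hkn) fun i j h1 h2 h3 => ?_,
    fun Z hZ hZX i j h1 h2 h3 => ?_⟩
  · unfold fillOnes
    split_ifs with h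
    exacts [(hXY i j h1 h2 h3 h).symm, rfl]
  · split_ifs with h
    exacts [(hZX i j h1 h2 h3 h).ge, hZ.1.1 i j h1 h2 h3]
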